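/- Let 1 < p, q < ∞ and let X = ℓ^p(ℓ^q) with norm ‖x‖ = (Σ_j (Σ_k |x_{j,k}|^q)^{p/q})^{1/p}. For nonzero x ∈ X, the functional F_x(y) := ‖x‖^{1−p} · Σ_j Δ_j(x)^{p−q} Σ_k |x_{j,k}|^{q−2} \overline{x_{j,k}} y_{j,k}, where Δ_j(x) = (Σ_k |x_{j,k}|^q)^{1/q}, satisfies ‖F_x‖ = 1 and F_x(x) = ‖x‖, i.e. F_x is a norming functional for x. -/

import Mathlib

open scoped ComplexConjugate

/-- The mixed norm of `ℓ^p(ℓ^q)`. -/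
noncomputable def lpqNorm (p q : ℝ) {𝕜 : Type*} [RCLike 𝕜] (x : ℕ → ℕ → 𝕜) : ℝ :=
  (∑' j, (∑' k, ‖x j k‖ ^ q) ^ (p / q)) ^ (1 / p)

/-- `Δ_j(x) = (Σ_k |x_{j,k}|^q)^{1/q}`. -/
noncomputable def lpqDelta (q : ℝ) {𝕜 : Type*} [RCLike 𝕜] (x : ℕ → ℕ → 𝕜) (j : ℕ) : ℝ :=
  (∑' k, ‖x j k‖ ^ q) ^ (1 / q)

/-- The candidate norming functional of a nonzero `x ∈ ℓ^p(ℓ^q)`. -/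
noncomputable def lpqF (p q : ℝ) {𝕜 : Type*} [RCLike 𝕜] (x y : ℕ → ℕ → 𝕜) : 𝕜 :=
  ((lpqNorm p q x ^ (1 - p) : ℝ) : 𝕜) *
    ∑' j, ((lpqDelta q x j ^ (p - q) : ℝ) : 𝕜) *
      ∑' k, ((‖x j k‖ ^ (q - 2) : ℝ) : 𝕜) * conj (x j k) * y j k

private lemma ofReal_tsum' {𝕜 : Type*} [RCLike 𝕜] (f : ℕ → ℝ) (hf : Summable f) :
    ((∑' n, f n : ℝ) : 𝕜) = ∑' n, ((f n : ℝ) : 𝕜) := by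
  simpa using (ContinuousLinearMap.map_tsum (RCLike.ofRealCLM (K := 𝕜)) hf)

/-- `F_x` is a norming functional for `x`: `F_x(x) = ‖x‖` and `|F_x(y)| ≤ ‖y‖` for all
`y ∈ ℓ^p(ℓ^q)` (hence `‖F_x‖ = 1`). -/
theorem stmt_5 {𝕜 : Type*} [RCLike 𝕜] (p q : ℝ) (hp : 1 < p) (hq : 1 < q)
    (x : ℕ → ℕ → 𝕜) (hx : x ≠ 0)
    (hx1 : ∀ j, Summable fun k => ‖x j k‖ ^ q)
    (hx2 : Summable fun j => (∑' k, ‖x j k‖ ^ q) ^ (p / q)) :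
    lpqF p q x x = ((lpqNorm p q x : ℝ) : 𝕜) ∧
      ∀ y : ℕ → ℕ → 𝕜, (∀ j, Summable fun k => ‖y j k‖ ^ q) →
        (Summable fun j => (∑' k, ‖y j k‖ ^ q) ^ (p / q)) →
        ‖lpqF p q x y‖ ≤ lpqNorm p q y := by
  have hq0 : 0 < q := lt_trans one_pos hq
  have hp0 : 0 < p := lt_trans one_pos hp
  have hq1 : q - 1 ≠ 0 := by linarith
  have hp1 : p - 1 ≠ 0 := by linarith
  set S : ℕ → ℝ := fun j => ∑' k, ‖x j k‖ ^ q with hSdef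
  have hSnn : ∀ j, 0 ≤ S j := fun j => tsum_nonneg fun k => Real.rpow_nonneg (norm_nonneg _) q
  have hΔ : ∀ j, lpqDelta q x j = S j ^ (1/q) := fun j => rfl
  set N := lpqNorm p q x with hNdef
  have hNval : N = (∑' j, S j ^ (p/q)) ^ (1/p) := rfl
  -- N > 0
  have hx' : ∃ j k, x j k ≠ 0 := by
    by_contra h; push_neg at h; exact hx (funext fun j => funext fun k => h j k)
  obtain ⟨j0, k0, hjk⟩ := hx'
  have hSj0 : 0 < S j0 :=
    lt_of_lt_of_le (Real.rpow_pos_of_pos (norm_pos_iff.2 hjk) q)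
      (Summable.le_tsum (hx1 j0) k0 fun k _ => Real.rpow_nonneg (norm_nonneg _) q)
  have hTsum : 0 < ∑' j, S j ^ (p/q) :=
    lt_of_lt_of_le (Real.rpow_pos_of_pos hSj0 _)
      (Summable.le_tsum hx2 j0 fun j _ => Real.rpow_nonneg (hSnn j) _)
  have hNpos : 0 < N := Real.rpow_pos_of_pos hTsum _
  have hNp : N ^ p = ∑' j, S j ^ (p/q) := by
    rw [hNval, ← Real.rpow_mul hTsum.le, one_div, inv_mul_cancel₀ hp0.ne', Real.rpow_one]
  -- Part 1
  have hinner : ∀ j, (∑' k, ((‖x j k‖ ^ (q - 2) : ℝ) : 𝕜) * conj (x j k) * x j k)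
      = ((S j : ℝ) : 𝕜) := by
    intro j
    have hpt : ∀ k, ((‖x j k‖ ^ (q - 2) : ℝ) : 𝕜) * conj (x j k) * x j k
        = ((‖x j k‖ ^ q : ℝ) : 𝕜) := by
      intro k
      rw [mul_assoc, RCLike.conj_mul]
      norm_cast
      rcases eq_or_ne (x j k) 0 with h | h
      · simp [h, Real.zero_rpow hq0.ne']
      · have h0 : 0 < ‖x j k‖ := norm_pos_iff.2 h
        rw [← Real.rpow_natCast ‖x j k‖ 2, ← Real.rpow_add h0]
        norm_num
    rw [tsum_congr hpt, ← ofReal_tsum' _ (hx1 j)]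
  have houter : ∀ j, ((lpqDelta q x j ^ (p - q) : ℝ) : 𝕜) * ((S j : ℝ) : 𝕜)
      = ((S j ^ (p/q) : ℝ) : 𝕜) := by
    intro j
    rw [← RCLike.ofReal_mul]
    congr 1
    rw [hΔ]
    rcases eq_or_lt_of_le (hSnn j) with h | h
    · rw [← h, Real.zero_rpow (one_div_ne_zero hq0.ne'),
        Real.zero_rpow (ne_of_gt (div_pos hp0 hq0))]
      simp
    · calc (S j ^ (1/q)) ^ (p-q) * S j
          = S j ^ ((1/q)*(p-q)) * S j ^ (1:ℝ) := by
            rw [← Real.rpow_mul (hSnn j), Real.rpow_one]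
        _ = S j ^ ((1/q)*(p-q) + 1) := (Real.rpow_add h _ _).symm
        _ = S j ^ (p/q) := by congr 1; field_simp; ring
  have h1 : lpqF p q x x = ((N : ℝ) : 𝕜) := by
    have hco : ∀ j, ((lpqDelta q x j ^ (p - q) : ℝ) : 𝕜) *
        (∑' k, ((‖x j k‖ ^ (q - 2) : ℝ) : 𝕜) * conj (x j k) * x j k)
        = ((S j ^ (p/q) : ℝ) : 𝕜) := fun j => by rw [hinner j, houter j]
    rw [lpqF, tsum_congr hco, ← ofReal_tsum' _ hx2, ← hNp, ← RCLike.ofReal_mul,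
      ← Real.rpow_add hNpos]
    norm_num
  refine ⟨h1, ?_⟩
  -- Part 2
  intro y hy1 hy2
  set T : ℕ → ℝ := fun j => ∑' k, ‖y j k‖ ^ q with hTdef
  have hTnn : ∀ j, 0 ≤ T j := fun j => tsum_nonneg fun k => Real.rpow_nonneg (norm_nonneg _) q
  have hMval : lpqNorm p q y = (∑' j, T j ^ (p/q)) ^ (1/p) := rfl
  have hq' : (q/(q-1)).HolderConjugate q := (Real.HolderConjugate.conjExponent hq).symm
  have hp' : (p/(p-1)).HolderConjugate p := (Real.HolderConjugate.conjExponent hp).symm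
  -- inner Hölder
  have hfx : ∀ j, (fun k => (‖x j k‖ ^ (q-1)) ^ (q/(q-1))) = fun k => ‖x j k‖ ^ q := by
    intro j; funext k
    rw [← Real.rpow_mul (norm_nonneg _)]
    congr 1; field_simp
  have hinner2 : ∀ j, (Summable fun k => ‖x j k‖ ^ (q-1) * ‖y j k‖) ∧
      ∑' k, ‖x j k‖ ^ (q-1) * ‖y j k‖ ≤ S j ^ ((q-1)/q) * T j ^ (1/q) := by
    intro j
    have H := Real.summable_and_inner_le_Lp_mul_Lq_tsum_of_nonneg hq'
      (f := fun k => ‖x j k‖ ^ (q-1)) (g := fun k => ‖y j k‖)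
      (fun k => Real.rpow_nonneg (norm_nonneg _) _) (fun k => norm_nonneg _)
      (by rw [hfx j]; exact hx1 j) (hy1 j)
    refine ⟨H.1, ?_⟩
    have := H.2
    rwa [hfx j, one_div_div] at this
  set A : ℕ → ℝ := fun j => ∑' k, ‖x j k‖ ^ (q-1) * ‖y j k‖ with hAdef
  have hAnn : ∀ j, 0 ≤ A j := fun j =>
    tsum_nonneg fun k => mul_nonneg (Real.rpow_nonneg (norm_nonneg _) _) (norm_nonneg _)
  have hnormterm : ∀ j k, ‖((‖x j k‖ ^ (q - 2) : ℝ) : 𝕜) * conj (x j k) * y j k‖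
      = ‖x j k‖ ^ (q-1) * ‖y j k‖ := by
    intro j k
    rw [norm_mul, norm_mul, RCLike.norm_ofReal, RCLike.norm_conj,
      abs_of_nonneg (Real.rpow_nonneg (norm_nonneg _) _)]
    congr 1
    rcases eq_or_ne (x j k) 0 with h | h
    · simp [h, Real.zero_rpow hq1]
    · have h0 : 0 < ‖x j k‖ := norm_pos_iff.2 h
      nth_rewrite 2 [← Real.rpow_one ‖x j k‖]
      rw [← Real.rpow_add h0]
      congr 1; ring
  have hAle : ∀ j, ‖∑' k, ((‖x j k‖ ^ (q - 2) : ℝ) : 𝕜) * conj (x j k) * y j k‖ ≤ A j := by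
    intro j
    have hsum : Summable fun k => ‖((‖x j k‖ ^ (q - 2) : ℝ) : 𝕜) * conj (x j k) * y j k‖ := by
      have := (hinner2 j).1
      refine this.congr fun k => ?_
      exact (hnormterm j k).symm
    calc ‖∑' k, ((‖x j k‖ ^ (q - 2) : ℝ) : 𝕜) * conj (x j k) * y j k‖
        ≤ ∑' k, ‖((‖x j k‖ ^ (q - 2) : ℝ) : 𝕜) * conj (x j k) * y j k‖ :=
          norm_tsum_le_tsum_norm hsum
      _ = A j := tsum_congr fun k => hnormterm j k
  -- combining exponents
  have hcomb : ∀ j, lpqDelta q x j ^ (p-q) * S j ^ ((q-1)/q) = S j ^ ((p-1)/q) := by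
    intro j
    rw [hΔ]
    rcases eq_or_lt_of_le (hSnn j) with h | h
    · rw [← h, Real.zero_rpow (one_div_ne_zero hq0.ne'),
        Real.zero_rpow (div_ne_zero hq1 hq0.ne'),
        Real.zero_rpow (div_ne_zero hp1 hq0.ne'), mul_zero]
    · rw [← Real.rpow_mul h.le, ← Real.rpow_add h]
      congr 1; field_simp; ring
  have hΔnn : ∀ j, 0 ≤ lpqDelta q x j ^ (p-q) := fun j => by rw [hΔ]; exact Real.rpow_nonneg (Real.rpow_nonneg (hSnn j) _) _
  -- outer Hölder
  have hfo : ∀ j, (S j ^ ((p-1)/q)) ^ (p/(p-1)) = S j ^ (p/q) := by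
    intro j
    rw [← Real.rpow_mul (hSnn j)]
    congr 1; field_simp
  have hgo : ∀ j, (T j ^ (1/q)) ^ p = T j ^ (p/q) := by
    intro j
    rw [← Real.rpow_mul (hTnn j)]
    congr 1; field_simp
  have houter2 := Real.summable_and_inner_le_Lp_mul_Lq_tsum_of_nonneg hp'
    (f := fun j => S j ^ ((p-1)/q)) (g := fun j => T j ^ (1/q))
    (fun j => Real.rpow_nonneg (hSnn j) _) (fun j => Real.rpow_nonneg (hTnn j) _)
    (hx2.congr fun j => (hfo j).symm) (hy2.congr fun j => (hgo j).symm)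
  have hDA_le : ∀ j, lpqDelta q x j ^ (p-q) * A j ≤ S j ^ ((p-1)/q) * T j ^ (1/q) := by
    intro j
    calc lpqDelta q x j ^ (p-q) * A j
        ≤ lpqDelta q x j ^ (p-q) * (S j ^ ((q-1)/q) * T j ^ (1/q)) :=
          mul_le_mul_of_nonneg_left (hinner2 j).2 (hΔnn j)
      _ = S j ^ ((p-1)/q) * T j ^ (1/q) := by rw [← mul_assoc, hcomb j]
  -- norm of outer terms
  have hcnorm : ∀ j, ‖((lpqDelta q x j ^ (p - q) : ℝ) : 𝕜) *
      ∑' k, ((‖x j k‖ ^ (q - 2) : ℝ) : 𝕜) * conj (x j k) * y j k‖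
      ≤ S j ^ ((p-1)/q) * T j ^ (1/q) := by
    intro j
    rw [norm_mul, RCLike.norm_ofReal, abs_of_nonneg (hΔnn j)]
    exact le_trans (mul_le_mul_of_nonneg_left (hAle j) (hΔnn j)) (hDA_le j)
  have hcsum : Summable fun j => ‖((lpqDelta q x j ^ (p - q) : ℝ) : 𝕜) *
      ∑' k, ((‖x j k‖ ^ (q - 2) : ℝ) : 𝕜) * conj (x j k) * y j k‖ :=
    Summable.of_nonneg_of_le (fun j => norm_nonneg _) hcnorm houter2.1
  -- final bound
  rw [lpqF, norm_mul, RCLike.norm_ofReal, abs_of_nonneg (Real.rpow_nonneg hNpos.le _)]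
  calc N ^ (1-p) * ‖∑' j, ((lpqDelta q x j ^ (p - q) : ℝ) : 𝕜) *
        ∑' k, ((‖x j k‖ ^ (q - 2) : ℝ) : 𝕜) * conj (x j k) * y j k‖
      ≤ N ^ (1-p) * ∑' j, S j ^ ((p-1)/q) * T j ^ (1/q) := by
        refine mul_le_mul_of_nonneg_left ?_ (Real.rpow_nonneg hNpos.le _)
        exact le_trans (norm_tsum_le_tsum_norm hcsum)
          (Summable.tsum_le_tsum hcnorm hcsum houter2.1)
    _ ≤ N ^ (1-p) * ((∑' j, S j ^ (p/q)) ^ (1/(p/(p-1))) * (∑' j, T j ^ (p/q)) ^ (1/p)) := by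
        refine mul_le_mul_of_nonneg_left ?_ (Real.rpow_nonneg hNpos.le _)
        have := houter2.2
        rwa [tsum_congr hfo, tsum_congr hgo] at this
    _ = lpqNorm p q y := by
        have hNp1 : (∑' j, S j ^ (p/q)) ^ ((p-1)/p) = N ^ (p-1) := by
          rw [← hNp, ← Real.rpow_mul hNpos.le]
          congr 1; field_simp
        rw [one_div_div, hNp1, ← mul_assoc, ← Real.rpow_add hNpos, hMval]
        have he : (1-p)+(p-1) = 0 := by ring
        rw [he, Real.rpow_zero, one_mul]
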